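/- Generalized (set-valued, restricted) antecedence characterization: let Ω ⊆ Δ_{2^s} be an admissible set and W ⊆ Δ_{2^n} a restricted set. Define T_Ω ∈ B_{2^m×2^n} by (T_Ω)_{i,j} = 1 iff M_F δ_{2^m}^i δ_{2^n}^j ∈ Ω. Then a logical matrix M_G is a W-antecedence solution (i.e., for all x ∈ W, M_F (M_G x) x ∈ Ω) if and only if, for every column index j with δ_{2^n}^j ∈ W, Col_j(M_G) ≤ Col_j(T_Ω) entrywise. -/

import Mathlib

open Matrix Kronecker

noncomputable section

/-- Row-major pairing `(i, j) ↦ N * i + j`, matching the standard Kronecker convention. -/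
def kronEquiv (M N : ℕ) : Fin M × Fin N ≃ Fin (M * N) := finProdFinEquiv

/-- Kronecker product of two (column) vectors. -/
def vecKron {M N : ℕ} (u : Fin M → ℝ) (x : Fin N → ℝ) : Fin (M * N) → ℝ :=
  fun k => u ((kronEquiv M N).symm k).1 * x ((kronEquiv M N).symm k).2

/-- `δ_N^i` (0-indexed): the `i`-th column of the identity matrix `I_N`. -/
def eVec (N : ℕ) (i : Fin N) : Fin N → ℝ := fun j => if j = i then 1 else 0

/-- The set `Δ_N` of columns of the identity matrix. -/
def deltaSet (N : ℕ) : Set (Fin N → ℝ) := {x | ∃ i, x = eVec N i}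

/-- A matrix is logical if every column is a standard basis vector. -/
def IsLogical {m n : ℕ} (L : Matrix (Fin m) (Fin n) ℝ) : Prop :=
  ∀ j, ∃ i, (fun k => L k j) = eVec m i

/-- The power-reducing matrix `PR_k = diag(δ_k^1, …, δ_k^k)`: column `j` is `δ_k^j ⊗ δ_k^j`. -/
def PRmat (k : ℕ) : Matrix (Fin (k * k)) (Fin k) ℝ :=
  Matrix.of fun i j => vecKron (eVec k j) (eVec k j) i

lemma stp_dim (n p : ℕ) : p * (Nat.lcm n p / p) = n * (Nat.lcm n p / n) := by
  rw [Nat.mul_div_cancel' (Nat.dvd_lcm_right n p), Nat.mul_div_cancel' (Nat.dvd_lcm_left n p)]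

/-- The semi-tensor product `A ⋉ B = (A ⊗ I_{t/n})(B ⊗ I_{t/p})`, `t = lcm(n,p)`. -/
def stp {m n p q : ℕ} (A : Matrix (Fin m) (Fin n) ℝ) (B : Matrix (Fin p) (Fin q) ℝ) :
    Matrix (Fin (m * (Nat.lcm n p / n))) (Fin (q * (Nat.lcm n p / p))) ℝ :=
  (Matrix.reindex (kronEquiv m _) (kronEquiv n _)
      (A ⊗ₖ (1 : Matrix (Fin (Nat.lcm n p / n)) (Fin (Nat.lcm n p / n)) ℝ))) *
  (Matrix.reindex ((kronEquiv p _).trans (finCongr (stp_dim n p))) (kronEquiv q _)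
      (B ⊗ₖ (1 : Matrix (Fin (Nat.lcm n p / p)) (Fin (Nat.lcm n p / p)) ℝ)))

open scoped Classical

/-! A logical matrix sends `δ^j` to the basis vector sitting in its `j`-th column, so on `W` the
antecedence condition reads column by column; and a basis vector `δ^{i₀}` lies entrywise below
a `0/1` column exactly when that column has a `1` at `i₀`. -/

lemma eVec_eq_single (N : ℕ) (i : Fin N) : eVec N i = Pi.single i 1 := by
  funext k
  simp only [eVec, Pi.single_apply]

lemma mulVec_eVec {M N : ℕ} (A : Matrix (Fin M) (Fin N) ℝ) (j : Fin N) :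
    A *ᵥ eVec N j = fun k => A k j := by
  rw [eVec_eq_single, mulVec_single_one]
  rfl

lemma forall_mem_iff_of_subset_deltaSet {N : ℕ} {W : Set (Fin N → ℝ)} (hW : W ⊆ deltaSet N)
    (Q : (Fin N → ℝ) → Prop) :
    (∀ x ∈ W, Q x) ↔ ∀ j, eVec N j ∈ W → Q (eVec N j) := by
  refine ⟨fun h j hj => h _ hj, fun h x hx => ?_⟩
  obtain ⟨j, rfl⟩ := hW hx
  exact h j hx

lemma eVec_le_indicator_iff {N : ℕ} (i₀ : Fin N) (P : Fin N → Prop) :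
    (∀ i, eVec N i₀ i ≤ if P i then 1 else 0) ↔ P i₀ := by
  refine ⟨fun h => ?_, fun h i => ?_⟩
  · by_contra hP
    have := h i₀
    simp only [eVec, if_neg hP] at this
    norm_num at this
  · by_cases hi : i = i₀
    · subst hi
      simp [eVec, h]
    · simp only [eVec, if_neg hi]
      split_ifs <;> norm_num

theorem subset_antecedence_iff_general (m n s : ℕ)
    (MF : Matrix (Fin (2 ^ s)) (Fin (2 ^ m * 2 ^ n)) ℝ)
    (Ω : Set (Fin (2 ^ s) → ℝ))
    (W : Set (Fin (2 ^ n) → ℝ)) (hW : W ⊆ deltaSet (2 ^ n))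
    (TΩ : Matrix (Fin (2 ^ m)) (Fin (2 ^ n)) ℝ)
    (hTΩ : ∀ i j, TΩ i j =
      if MF.mulVec (vecKron (eVec (2 ^ m) i) (eVec (2 ^ n) j)) ∈ Ω then 1 else 0)
    (MG : Matrix (Fin (2 ^ m)) (Fin (2 ^ n)) ℝ) (hMG : IsLogical MG) :
    (∀ x ∈ W, MF.mulVec (vecKron (MG.mulVec x) x) ∈ Ω) ↔
      ∀ j, eVec (2 ^ n) j ∈ W → ∀ i, MG i j ≤ TΩ i j := by
  rw [forall_mem_iff_of_subset_deltaSet hW]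
  refine forall_congr' fun j => imp_congr_right fun _ => ?_
  obtain ⟨i₀, hcol⟩ := hMG j
  have hMG_apply : ∀ i, MG i j = eVec (2 ^ m) i₀ i := fun i => congrFun hcol i
  rw [mulVec_eVec, hcol]
  simp only [hMG_apply, hTΩ]
  exact (eVec_le_indicator_iff i₀ fun i => MF *ᵥ vecKron (eVec _ i) (eVec _ j) ∈ Ω).symm

/-- `M_G` is a `W`-antecedence solution with admissible set `Ω`
iff `Col_j(M_G) ≤ Col_j(T_Ω)` for every column `j` with `δ_{2^n}^j ∈ W`. -/
theorem subset_antecedence_iff (m n s : ℕ)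
    (MF : Matrix (Fin (2 ^ s)) (Fin (2 ^ m * 2 ^ n)) ℝ) (hMF : IsLogical MF)
    (Ω : Set (Fin (2 ^ s) → ℝ)) (hΩ : Ω ⊆ deltaSet (2 ^ s))
    (W : Set (Fin (2 ^ n) → ℝ)) (hW : W ⊆ deltaSet (2 ^ n))
    (TΩ : Matrix (Fin (2 ^ m)) (Fin (2 ^ n)) ℝ)
    (hTΩ : ∀ i j, TΩ i j =
      if MF.mulVec (vecKron (eVec (2 ^ m) i) (eVec (2 ^ n) j)) ∈ Ω then 1 else 0)
    (MG : Matrix (Fin (2 ^ m)) (Fin (2 ^ n)) ℝ) (hMG : IsLogical MG) :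
    (∀ x ∈ W, MF.mulVec (vecKron (MG.mulVec x) x) ∈ Ω) ↔
      ∀ j, eVec (2 ^ n) j ∈ W → ∀ i, MG i j ≤ TΩ i j :=
  subset_antecedence_iff_general m n s MF Ω W hW TΩ hTΩ MG hMG
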